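/- Let P be a poset and M a P-persistence module. If g : Q → M is a finite projective cover and h : Q' → M is any surjection from a projective module of finite rank, then the Betti table of Q is pointwise less than or equal to the Betti table of Q'; moreover Q is a direct summand of Q' (there exist g' : Q → Q' and h' : Q' → Q with h ∘ g' = g, g ∘ h' = h, and h' ∘ g' = id_Q). -/

import Mathlib

/-- A `P`-persistence module: a functor `P → Vec_k`, given explicitly. -/
structure PersMod (P : Type) [PartialOrder P] (k : Type) [Field k] : Type 1 where
  obj : P → Type
  [acg : ∀ r, AddCommGroup (obj r)]
  [mod : ∀ r, Module k (obj r)]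
  map : ∀ {r s : P}, r ≤ s → (obj r →ₗ[k] obj s)
  map_refl : ∀ (r : P) (x : obj r), map (le_refl r) x = x
  map_trans : ∀ {r s t : P} (h1 : r ≤ s) (h2 : s ≤ t) (x : obj r),
    map h2 (map h1 x) = map (le_trans h1 h2) x

attribute [instance] PersMod.acg PersMod.mod

variable {P : Type} [PartialOrder P]

/-- A morphism of persistence modules: a natural transformation. -/
structure PersHom (k : Type) [Field k] (M N : PersMod P k) where
  app : ∀ r : P, M.obj r →ₗ[k] N.obj r
  nat : ∀ {r s : P} (h : r ≤ s) (x : M.obj r),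
    app s (M.map h x) = N.map h (app r x)

/-- The finite direct sum of indicator projectives `⊕_{i ∈ I} P_{f i}`:
at grade `r` it is the free vector space on `{i // f i ≤ r}`, with structure maps
induced by the inclusions of index sets.  For `I = Unit` this is the indicator
projective `P_{f ()}` itself. -/
noncomputable def freePers (k : Type) [Field k] (I : Type) (f : I → P) : PersMod P k where
  obj r := {i : I // f i ≤ r} →₀ k
  map h := Finsupp.lmapDomain k k fun i => ⟨i.1, le_trans i.2 h⟩
  map_refl r x := by
    rw [Finsupp.lmapDomain_apply,
      show (fun i : {i : I // f i ≤ r} => (⟨i.1, le_trans i.2 (le_refl r)⟩ :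
        {i : I // f i ≤ r})) = id from rfl, Finsupp.mapDomain_id]
  map_trans h1 h2 x := by
    rw [Finsupp.lmapDomain_apply, Finsupp.lmapDomain_apply, Finsupp.lmapDomain_apply,
      ← Finsupp.mapDomain_comp]
    rfl

/-- A morphism of persistence modules is surjective if it is so at every grade. -/
def PersHom.Surj {k : Type} [Field k] {M N : PersMod P k} (g : PersHom k M N) : Prop :=
  ∀ r : P, Function.Surjective (g.app r)
/-- `g : ⊕_{i∈I} P_{f i} → M` is a finite projective cover: it is surjective and the
total number of indecomposable summands is minimal among all such surjections. -/
def IsProjCover {k : Type} [Field k] {I : Type} [Fintype I] (f : I → P) (M : PersMod P k)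
    (g : PersHom k (freePers k I f) M) : Prop :=
  g.Surj ∧ ∀ (J : Type) (_ : Fintype J) (f' : J → P)
    (g' : PersHom k (freePers k J f') M), g'.Surj →
      Fintype.card I ≤ Fintype.card J

/-!
Let `rad M p ⊆ M p` be the part of `M p` coming from strictly lower degrees. For any surjection
`⊕ᵢ P_{f i} → M`, the classes of the generators of degree `p` span `M p / rad M p`; for a minimal
cover they are also linearly independent, since a relation would make one generator redundant.
Comparing dimensions gives the inequality of Betti tables.

Lifting `g` through `h` and `h` through `g` gives `g' : Q → Q'` and `h₀ : Q' → Q` with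
`g ∘ h₀ ∘ g' = g`. By the linear independence, `h₀ ∘ g'` is the identity on each block of
generators of equal degree, so it is unitriangular and thus invertible in every degree, and
`h' := (h₀ ∘ g')⁻¹ ∘ h₀` splits `g'`.
-/

lemma card_le_card_of_linearIndependent_of_span_eq_top {K V ι κ : Type*} [DivisionRing K]
    [AddCommGroup V] [Module K V] [Fintype ι] [Fintype κ] {v : ι → V} {w : κ → V}
    (hv : LinearIndependent K v) (hw : Submodule.span K (Set.range w) = ⊤) :
    Fintype.card ι ≤ Fintype.card κ := by
  have : Module.Finite K V := ⟨hw ▸ Submodule.fg_span (Set.finite_range w)⟩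
  calc Fintype.card ι ≤ Module.finrank K V := hv.fintype_card_le_finrank
    _ = Module.finrank K (Submodule.span K (Set.range w)) := by rw [hw, finrank_top]
    _ ≤ Fintype.card κ := finrank_range_le_card w

section

variable {k : Type} [Field k]

namespace PersMod

noncomputable def rad (M : PersMod P k) (p : P) : Submodule k (M.obj p) :=
  ⨆ q : {q // q < p}, LinearMap.range (M.map q.2.le)

lemma map_mem_rad (M : PersMod P k) {p q : P} (hq : q < p) (x : M.obj q) :
    M.map hq.le x ∈ M.rad p :=
  Submodule.mem_iSup_of_mem ⟨q, hq⟩ (LinearMap.mem_range_self _ x)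

end PersMod

namespace freePers

variable {I : Type} {f : I → P}

noncomputable def single {r : P} (a : {i // f i ≤ r}) (c : k) : (freePers k I f).obj r :=
  Finsupp.single a c

noncomputable def gen (f : I → P) (i : I) : (freePers k I f).obj (f i) :=
  single ⟨i, le_rfl⟩ 1

noncomputable def coeff {r : P} (a : {i // f i ≤ r}) : (freePers k I f).obj r →ₗ[k] k :=
  Finsupp.lapply a

instance [Finite I] (r : P) : Module.Finite k ((freePers k I f).obj r) :=
  inferInstanceAs (Module.Finite k ({i // f i ≤ r} →₀ k))

@[elab_as_elim]
lemma induction_on {r : P} {motive : (freePers k I f).obj r → Prop} (x : (freePers k I f).obj r)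
    (zero : motive 0) (add : ∀ x y, motive x → motive y → motive (x + y))
    (single : ∀ a c, motive (single a c)) : motive x :=
  Finsupp.induction_linear x zero add single

lemma smul_single_one {r : P} (a : {i // f i ≤ r}) (c : k) :
    c • (single a 1 : (freePers k I f).obj r) = single a c :=
  Finsupp.smul_single_one a c

lemma map_single {r s : P} (hrs : r ≤ s) (a : {i // f i ≤ r}) (c : k) :
    (freePers k I f).map hrs (single a c) = single ⟨a.1, a.2.trans hrs⟩ c :=
  Finsupp.mapDomain_single

lemma single_eq_smul_map_gen {r : P} (i : I) (hi : f i ≤ r) (c : k) :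
    (single ⟨i, hi⟩ c : (freePers k I f).obj r) = c • (freePers k I f).map hi (gen f i) := by
  rw [gen, map_single, smul_single_one]

lemma coeff_single_same {r : P} (a : {i // f i ≤ r}) (c : k) :
    coeff a (single a c : (freePers k I f).obj r) = c :=
  Finsupp.single_eq_same

lemma coeff_single_of_ne {r : P} {a b : {i // f i ≤ r}} (hab : b ≠ a) (c : k) :
    coeff a (single b c : (freePers k I f).obj r) = 0 :=
  Finsupp.single_eq_of_ne' hab

lemma coeff_map_of_le {r s : P} (hrs : r ≤ s) (z : (freePers k I f).obj r) (i : I)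
    (hi : f i ≤ r) : coeff ⟨i, hi.trans hrs⟩ ((freePers k I f).map hrs z) = coeff ⟨i, hi⟩ z :=
  Finsupp.mapDomain_apply (f := fun a : {j // f j ≤ r} => (⟨a.1, a.2.trans hrs⟩ : {j // f j ≤ s}))
    (fun _ _ hab => Subtype.ext (congrArg Subtype.val hab :)) z ⟨i, hi⟩

lemma coeff_map_of_not_le {r s : P} (hrs : r ≤ s) (z : (freePers k I f).obj r) (i : I)
    (hi : f i ≤ s) (hir : ¬ f i ≤ r) : coeff ⟨i, hi⟩ ((freePers k I f).map hrs z) = 0 :=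
  Finsupp.mapDomain_of_notMem_range _ _ fun ⟨a, ha⟩ => hir (congrArg Subtype.val ha ▸ a.2 :)

end freePers

open freePers

namespace PersHom

variable {I : Type} {f : I → P} {M N : PersMod P k}

lemma app_single (φ : PersHom k (freePers k I f) N) {r : P} (i : I) (hi : f i ≤ r) (c : k) :
    φ.app r (single ⟨i, hi⟩ c) = c • N.map hi (φ.app (f i) (gen f i)) := by
  rw [single_eq_smul_map_gen, map_smul, φ.nat]

noncomputable def ofGenApp (v : ∀ i, N.obj (f i)) (r : P) : (freePers k I f).obj r →ₗ[k] N.obj r :=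
  Finsupp.linearCombination k fun a => N.map a.2 (v a.1)

lemma ofGenApp_single (v : ∀ i, N.obj (f i)) {r : P} (i : I) (hi : f i ≤ r) (c : k) :
    ofGenApp v r (single ⟨i, hi⟩ c) = c • N.map hi (v i) :=
  Finsupp.linearCombination_single _ _ _

noncomputable def ofGen (v : ∀ i, N.obj (f i)) : PersHom k (freePers k I f) N where
  app := ofGenApp v
  nat {r s} hrs x := by
    induction x using induction_on with
    | zero => simp only [map_zero]
    | add x y hx hy => simp only [map_add, hx, hy]
    | single a c => rw [map_single, ofGenApp_single, ofGenApp_single, map_smul, N.map_trans]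

lemma ofGen_app_single (v : ∀ i, N.obj (f i)) {r : P} (i : I) (hi : f i ≤ r) (c : k) :
    (ofGen v).app r (single ⟨i, hi⟩ c) = c • N.map hi (v i) :=
  ofGenApp_single v i hi c

def comp {L : PersMod P k} (ψ : PersHom k M N) (φ : PersHom k L M) : PersHom k L N where
  app r := ψ.app r ∘ₗ φ.app r
  nat hrs x := by simp only [LinearMap.comp_apply, φ.nat, ψ.nat]

lemma comp_app {L : PersMod P k} (ψ : PersHom k M N) (φ : PersHom k L M) (r : P) (x : L.obj r) :
    (ψ.comp φ).app r x = ψ.app r (φ.app r x) :=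
  rfl

noncomputable def lift (h : PersHom k N M) (hh : h.Surj) (g : PersHom k (freePers k I f) M) :
    PersHom k (freePers k I f) N :=
  ofGen fun i => (hh (f i) (g.app (f i) (gen f i))).choose

lemma app_lift (h : PersHom k N M) (hh : h.Surj) (g : PersHom k (freePers k I f) M) (r : P)
    (x : (freePers k I f).obj r) : h.app r ((lift h hh g).app r x) = g.app r x := by
  induction x using induction_on with
  | zero => simp only [map_zero]
  | add x y hx hy => simp only [map_add, hx, hy]
  | single a c =>
    rw [lift, ofGen_app_single, map_smul, h.nat, (hh _ _).choose_spec, app_single]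

noncomputable def invOfBijective (φ : PersHom k M M) (hφ : ∀ r, Function.Bijective (φ.app r)) :
    PersHom k M M where
  app r := (LinearEquiv.ofBijective (φ.app r) (hφ r)).symm
  nat {r s} hrs x := (hφ s).1 <| by
    simp only [LinearEquiv.coe_coe, LinearEquiv.apply_ofBijective_symm_apply, φ.nat]

lemma app_invOfBijective_app (φ : PersHom k M M) (hφ : ∀ r, Function.Bijective (φ.app r)) (r : P)
    (x : M.obj r) : φ.app r ((φ.invOfBijective hφ).app r x) = x :=
  LinearEquiv.apply_ofBijective_symm_apply (φ.app r) x

lemma invOfBijective_app_app (φ : PersHom k M M) (hφ : ∀ r, Function.Bijective (φ.app r)) (r : P)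
    (x : M.obj r) : (φ.invOfBijective hφ).app r (φ.app r x) = x :=
  LinearEquiv.ofBijective_symm_apply_apply (φ.app r) x

lemma map_mem_range (φ : PersHom k M N) {r s : P} (hrs : r ≤ s) {y : N.obj r}
    (hy : y ∈ LinearMap.range (φ.app r)) : N.map hrs y ∈ LinearMap.range (φ.app s) := by
  obtain ⟨x, rfl⟩ := hy
  exact ⟨M.map hrs x, φ.nat hrs x⟩

noncomputable def topClass (g : PersHom k (freePers k I f) M) (p : P) (a : {i // f i = p}) :
    M.obj p ⧸ M.rad p :=
  (M.rad p).mkQ (g.app p (single ⟨a.1, a.2.le⟩ 1))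

lemma mkQ_app_single_of_lt (g : PersHom k (freePers k I f) M) {p : P} (i : I) (hi : f i < p)
    (c : k) : (M.rad p).mkQ (g.app p (single ⟨i, hi.le⟩ c)) = 0 := by
  rw [Submodule.mkQ_apply, Submodule.Quotient.mk_eq_zero, app_single]
  exact Submodule.smul_mem _ _ (M.map_mem_rad hi _)

lemma mkQ_app_single_of_eq (g : PersHom k (freePers k I f) M) {p : P} (i : I) (hi : f i = p)
    (c : k) : (M.rad p).mkQ (g.app p (single ⟨i, hi.le⟩ c)) = c • g.topClass p ⟨i, hi⟩ := by
  rw [topClass, ← map_smul, ← map_smul, smul_single_one]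

lemma span_topClass_eq_top {g : PersHom k (freePers k I f) M} (hg : g.Surj) (p : P) :
    Submodule.span k (Set.range (g.topClass p)) = ⊤ := by
  refine Submodule.eq_top_iff'.2 fun y => ?_
  obtain ⟨y, rfl⟩ := (M.rad p).mkQ_surjective y
  obtain ⟨x, rfl⟩ := hg p y
  induction x using induction_on with
  | zero => simp only [map_zero, Submodule.zero_mem]
  | add x y hx hy => simpa only [map_add] using Submodule.add_mem _ hx hy
  | single a c =>
    obtain ⟨i, hi⟩ := a
    rcases hi.lt_or_eq with hlt | rfl
    · rw [mkQ_app_single_of_lt g i hlt]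
      exact Submodule.zero_mem _
    · rw [mkQ_app_single_of_eq g i rfl]
      exact Submodule.smul_mem _ _ (Submodule.subset_span ⟨_, rfl⟩)

lemma mkQ_app_eq_sum (g : PersHom k (freePers k I f) M) {p : P} [Fintype {i // f i = p}]
    (x : (freePers k I f).obj p) :
    (M.rad p).mkQ (g.app p x) = ∑ a, coeff ⟨a.1, a.2.le⟩ x • g.topClass p a := by
  induction x using induction_on with
  | zero => simp only [map_zero, zero_smul, Finset.sum_const_zero]
  | add x y hx hy => simp only [map_add, hx, hy, add_smul, Finset.sum_add_distrib]
  | single a c =>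
    obtain ⟨i, hi⟩ := a
    have hcoeff : ∀ a : {i // f i = p}, a.1 ≠ i → coeff ⟨a.1, a.2.le⟩ (single ⟨i, hi⟩ c) = 0 :=
      fun a hai => coeff_single_of_ne (fun h => hai (congrArg Subtype.val h).symm) c
    rcases hi.lt_or_eq with hlt | rfl
    · rw [mkQ_app_single_of_lt g i hlt]
      exact (Finset.sum_eq_zero fun a _ => by
        rw [hcoeff a (fun h => hlt.ne (h ▸ a.2)), zero_smul]).symm
    · rw [mkQ_app_single_of_eq g i rfl, Finset.sum_eq_single_of_mem ⟨i, rfl⟩ (Finset.mem_univ _)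
        fun a _ hai => by rw [hcoeff a (fun h => hai (Subtype.ext h)), zero_smul]]
      rw [coeff_single_same]

noncomputable def eraseGen (g : PersHom k (freePers k I f) N) (i₀ : I) :
    PersHom k (freePers k {i // i ≠ i₀} fun i => f i) N :=
  ofGen fun i => g.app (f i) (gen f i)

section

variable {g : PersHom k (freePers k I f) N} {i₀ : I}

lemma app_single_mem_range_eraseGen {r : P} {i : I} (hi : f i ≤ r) (hne : i ≠ i₀) (c : k) :
    g.app r (single ⟨i, hi⟩ c) ∈ LinearMap.range ((g.eraseGen i₀).app r) :=
  ⟨single ⟨⟨i, hne⟩, hi⟩ c, by rw [eraseGen, ofGen_app_single, app_single]⟩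

lemma app_mem_range_eraseGen_of_not_le {r : P} (hr : ¬ f i₀ ≤ r) (x : (freePers k I f).obj r) :
    g.app r x ∈ LinearMap.range ((g.eraseGen i₀).app r) := by
  induction x using induction_on with
  | zero => simp only [map_zero, Submodule.zero_mem]
  | add x y hx hy => simpa only [map_add] using Submodule.add_mem _ hx hy
  | single a c => exact app_single_mem_range_eraseGen a.2 (fun h => hr (h ▸ a.2 :)) c

lemma rad_le_range_eraseGen (hg : g.Surj) (i₀ : I) :
    N.rad (f i₀) ≤ LinearMap.range ((g.eraseGen i₀).app (f i₀)) :=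
  iSup_le fun ⟨q, hq⟩ => by
    rintro _ ⟨y, rfl⟩
    obtain ⟨x, rfl⟩ := hg q y
    exact map_mem_range _ _ (app_mem_range_eraseGen_of_not_le hq.not_ge x)

lemma eraseGen_surj (hg : g.Surj)
    (hgen : g.app (f i₀) (gen f i₀) ∈ LinearMap.range ((g.eraseGen i₀).app (f i₀))) :
    (g.eraseGen i₀).Surj := by
  intro r y
  obtain ⟨x, rfl⟩ := hg r y
  change g.app r x ∈ LinearMap.range _
  induction x using induction_on with
  | zero => simp only [map_zero, Submodule.zero_mem]
  | add x y hx hy => simpa only [map_add] using Submodule.add_mem _ hx hy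
  | single a c =>
    obtain ⟨i, hi⟩ := a
    by_cases hne : i = i₀
    · subst hne
      rw [app_single]
      exact Submodule.smul_mem _ _ (map_mem_range _ hi hgen)
    · exact app_single_mem_range_eraseGen hi hne c

end

section

variable (φ : PersHom k (freePers k I f) (freePers k I f))

/-- Blocks from higher to lower degree vanish for any endomorphism, so this condition makes the
matrix of `φ` unitriangular for every linear extension of the degree order. -/
def IsUnitriangular : Prop :=
  ∀ i j (hj : f j = f i), coeff ⟨j, hj.le⟩ (φ.app (f i) (gen f i)) = coeff ⟨j, hj.le⟩ (gen f i)

variable {φ}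

lemma IsUnitriangular.coeff_app_single (hφ : φ.IsUnitriangular) {r : P} (a b : {i // f i ≤ r})
    (hab : f a.1 ≤ f b.1 → f b.1 ≤ f a.1) (c : k) :
    coeff a (φ.app r (single b c)) = coeff a (single b c) := by
  obtain ⟨j, hj⟩ := a
  obtain ⟨i, hi⟩ := b
  rw [app_single, single_eq_smul_map_gen, map_smul, map_smul]
  congr 1
  by_cases hji : f j ≤ f i
  · rw [coeff_map_of_le hi _ j hji, coeff_map_of_le hi _ j hji]
    exact hφ i j (le_antisymm hji (hab hji))
  · rw [coeff_map_of_not_le hi _ j hj hji, coeff_map_of_not_le hi _ j hj hji]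

lemma IsUnitriangular.coeff_app (hφ : φ.IsUnitriangular) {r : P} (x : (freePers k I f).obj r)
    (a : {i // f i ≤ r}) (ha : ∀ b, coeff b x ≠ 0 → f a.1 ≤ f b.1 → f b.1 ≤ f a.1) :
    coeff a (φ.app r x) = coeff a x := by
  have hx : x = ∑ b ∈ Finsupp.support x, single b (coeff b x) := (Finsupp.sum_single x).symm
  rw [hx, map_sum, map_sum, map_sum]
  exact Finset.sum_congr rfl fun b hb =>
    hφ.coeff_app_single a b (ha b (Finsupp.mem_support_iff.1 hb)) _

lemma IsUnitriangular.injective_app (hφ : φ.IsUnitriangular) (r : P) :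
    Function.Injective (φ.app r) := by
  refine (injective_iff_map_eq_zero _).2 fun x hx => ?_
  by_contra hne
  obtain ⟨a, ha, hmax⟩ :=
    Finset.exists_maximalFor (fun b => f b.1) _ (Finsupp.support_nonempty_iff.2 hne)
  have := hφ.coeff_app x a fun b hb => hmax (Finsupp.mem_support_iff.2 hb)
  rw [hx, map_zero] at this
  exact Finsupp.mem_support_iff.1 ha this.symm

end

end PersHom

namespace IsProjCover

open PersHom

variable {I : Type} [Fintype I] {f : I → P} {M : PersMod P k}
  {g : PersHom k (freePers k I f) M}

lemma linearIndependent_topClass (hg : IsProjCover f M g) (p : P) :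
    LinearIndependent k (g.topClass p) := by
  classical
  rw [linearIndependent_iff_notMem_span]
  rintro ⟨i₀, rfl⟩ hmem
  set t : {i // f i = f i₀} → M.obj (f i₀) := fun a => g.app _ (single ⟨a.1, a.2.le⟩ 1)
  have hgen : g.app (f i₀) (gen f i₀) ∈ LinearMap.range ((g.eraseGen i₀).app (f i₀)) := by
    have ht : t ⟨i₀, rfl⟩ ∈ Submodule.comap (M.rad (f i₀)).mkQ
        (Submodule.map (M.rad (f i₀)).mkQ (Submodule.span k (t '' (Set.univ \ {⟨i₀, rfl⟩})))) := by
      rwa [Submodule.mem_comap, Submodule.map_span, ← Set.image_comp]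
    rw [Submodule.comap_map_mkQ] at ht
    refine sup_le (rad_le_range_eraseGen hg.1 i₀) (Submodule.span_le.2 ?_) ht
    rintro _ ⟨a, ha, rfl⟩
    exact app_single_mem_range_eraseGen a.2.le (fun h => ha.2 (Subtype.ext h)) 1
  have hcard := hg.2 _ inferInstance _ _ (eraseGen_surj hg.1 hgen)
  have := Fintype.card_subtype_lt (p := (· ≠ i₀)) (x := i₀) (by simp)
  omega

lemma betti_le (hg : IsProjCover f M g) {J : Type} [Fintype J] {f' : J → P}
    {h : PersHom k (freePers k J f') M} (hh : h.Surj) (p : P) :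
    Nat.card {i // f i = p} ≤ Nat.card {j // f' j = p} := by
  classical
  rw [Nat.card_eq_fintype_card, Nat.card_eq_fintype_card]
  exact card_le_card_of_linearIndependent_of_span_eq_top (hg.linearIndependent_topClass p)
    (span_topClass_eq_top hh p)

lemma coeff_eq_of_mkQ_app_eq (hg : IsProjCover f M g) {p : P} {x y : (freePers k I f).obj p}
    (hxy : (M.rad p).mkQ (g.app p x) = (M.rad p).mkQ (g.app p y)) (a : {i // f i = p}) :
    coeff ⟨a.1, a.2.le⟩ x = coeff ⟨a.1, a.2.le⟩ y := by
  classical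
  rw [mkQ_app_eq_sum, mkQ_app_eq_sum, ← sub_eq_zero, ← Finset.sum_sub_distrib] at hxy
  simp_rw [← sub_smul] at hxy
  exact sub_eq_zero.1 (Fintype.linearIndependent_iff.1 (hg.linearIndependent_topClass p) _ hxy a)

lemma isUnitriangular_of_comp_eq (hg : IsProjCover f M g)
    {φ : PersHom k (freePers k I f) (freePers k I f)}
    (hφ : ∀ r x, g.app r (φ.app r x) = g.app r x) : φ.IsUnitriangular :=
  fun _ j hj => hg.coeff_eq_of_mkQ_app_eq (congrArg _ (hφ _ _)) ⟨j, hj⟩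

lemma bijective_app_of_comp_eq (hg : IsProjCover f M g)
    {φ : PersHom k (freePers k I f) (freePers k I f)}
    (hφ : ∀ r x, g.app r (φ.app r x) = g.app r x) (r : P) : Function.Bijective (φ.app r) :=
  have hinj := (hg.isUnitriangular_of_comp_eq hφ).injective_app r
  ⟨hinj, LinearMap.injective_iff_surjective.1 hinj⟩

end IsProjCover

end

theorem projCover_betti_le_and_summand (k : Type) [Field k] (M : PersMod P k)
    (I : Type) [Fintype I] (f : I → P) (g : PersHom k (freePers k I f) M)
    (hg : IsProjCover f M g)
    (J : Type) [Fintype J] (f' : J → P) (h : PersHom k (freePers k J f') M)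
    (hh : h.Surj) :
    (∀ p : P, Nat.card {i : I // f i = p} ≤ Nat.card {j : J // f' j = p}) ∧
    ∃ (g' : PersHom k (freePers k I f) (freePers k J f'))
      (h' : PersHom k (freePers k J f') (freePers k I f)),
        (∀ (r : P) x, h.app r (g'.app r x) = g.app r x) ∧
        (∀ (r : P) x, g.app r (h'.app r x) = h.app r x) ∧
        (∀ (r : P) x, h'.app r (g'.app r x) = x) := by
  refine ⟨hg.betti_le hh, ?_⟩
  set g₀ := PersHom.lift h hh g
  set h₀ := PersHom.lift g hg.1 h
  have hφ : ∀ r x, g.app r ((h₀.comp g₀).app r x) = g.app r x := fun r x => by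
    rw [PersHom.comp_app, PersHom.app_lift, PersHom.app_lift]
  have hbij := hg.bijective_app_of_comp_eq hφ
  refine ⟨g₀, (PersHom.invOfBijective _ hbij).comp h₀, PersHom.app_lift h hh g, fun r x => ?_,
    fun r x => PersHom.invOfBijective_app_app _ hbij r x⟩
  rw [PersHom.comp_app, ← hφ, PersHom.app_invOfBijective_app, PersHom.app_lift]
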